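/- arXiv:1705.02746 — 3 statements merged into one kernel-verified Lean document; each statement's English description precedes it below -/
import Mathlib

section
/- Suppose a class X̄ ⊆ L²(ℝ) of real-valued functions is L²(ℝ)-predictable in the weak sense. Then for every s ∈ ℝ, every x ∈ X̄ is uniquely defined by its restriction to (−∞, s]: if x, x′ ∈ X̄ satisfy x(t) = x′(t) for almost every t ≤ s, then x = x′ almost everywhere on ℝ. -/
open MeasureTheory Filter Complex
open scoped ENNReal NNReal

noncomputable section

/-- The Fourier transform `(ℱx)(iω) = ∫ e^{-iωt} x(t) dt`. -/
def FT (x : ℝ → ℂ) (ω : ℝ) : ℂ :=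
  ∫ t : ℝ, Complex.exp (-(Complex.I * ω * t)) * x t

/-- The inverse Fourier transform. -/
def invFT (X : ℝ → ℂ) (t : ℝ) : ℂ :=
  (1 / (2 * Real.pi) : ℝ) • ∫ ω : ℝ, Complex.exp (Complex.I * ω * t) * X ω

/-- The Laplace transform of a function (supported on `[0,∞)`). -/
def Laplace (f : ℝ → ℝ) (z : ℂ) : ℂ :=
  ∫ t in Set.Ioi (0:ℝ), Complex.exp (-(z * t)) * f t

/-- The class `𝒦`. -/
def IsKclass (κ : ℝ → ℝ) : Prop :=
  (∀ t > (0:ℝ), κ t = 0) ∧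
  MeasureTheory.Integrable (fun t => (κ t : ℂ)) ∧
  ∃ m : ℕ, 0 < m ∧ ∃ (a : Fin m → ℝ) (d : Polynomial ℂ),
    (∀ j, 0 < a j) ∧ d.degree < (m : WithBot ℕ) ∧
    ∀ ω : ℝ, FT (fun t => (κ t : ℂ)) ω
      = Polynomial.eval (Complex.I * ω) d / ∏ j, (Complex.I * ω - (a j : ℂ))

/-- The class `𝒦̂`: causal kernels with Laplace transform in `H² ∩ H^∞`. -/
def IsKhatClass (κh : ℝ → ℝ) : Prop :=
  (∀ t < (0:ℝ), κh t = 0) ∧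
  MemLp (fun t => (κh t : ℂ)) 2 (volume : Measure ℝ) ∧
  DifferentiableOn ℂ (Laplace κh) {z : ℂ | 0 < z.re} ∧
  (∃ M : ℝ, ∀ z : ℂ, 0 < z.re → ‖Laplace κh z‖ ≤ M) ∧
  (∃ C : ℝ, ∀ s : ℝ, 0 < s → (∫ ω : ℝ, ‖Laplace κh (s + Complex.I * ω)‖ ^ 2) ≤ C)

/-- Anticausal convolution `(κ∘x)(t) = ∫_t^∞ κ(t-s) x(s) ds`. -/
def aconv (κ : ℝ → ℝ) (x : ℝ → ℂ) (t : ℝ) : ℂ :=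
  ∫ s in Set.Ioi t, (κ (t - s) : ℂ) * x s

/-- Causal convolution `(κ̂∘x)(t) = ∫_{-∞}^t κ̂(t-s) x(s) ds`. -/
def cconv (κh : ℝ → ℝ) (x : ℝ → ℂ) (t : ℝ) : ℂ :=
  ∫ s in Set.Iic t, (κh (t - s) : ℂ) * x s

/-- Causal convolution with a complex-valued kernel. -/
def cconvC (κh : ℝ → ℂ) (x : ℝ → ℂ) (t : ℝ) : ℂ :=
  ∫ s in Set.Iic t, κh (t - s) * x s

/-- The weight `h(ω,q,c) = exp (c / |ω|^q)`. -/
def hw (q c ω : ℝ) : ℝ := Real.exp (c / |ω| ^ q)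

/-- The norm of `𝒳(q,c)`: `esssup |(ℱx)(iω)| h(ω,q,c)`. -/
def Xnorm (q c : ℝ) (x : ℝ → ℂ) : ℝ≥0∞ :=
  eLpNorm (fun ω : ℝ => hw q c ω • FT x ω) ⊤ (volume : Measure ℝ)

/-- Membership in the class `𝒳(q,c)`. -/
def memX (q c : ℝ) (x : ℝ → ℂ) : Prop :=
  MemLp x 2 (volume : Measure ℝ) ∧ Xnorm q c x < ⊤

/-- The function `V_j`-factor: `1 - exp(-γ (z-a)/(z+γ^{-r}))`. -/
def Vone (r γ a : ℝ) (z : ℂ) : ℂ :=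
  1 - Complex.exp (-((γ : ℂ) * (z - (a : ℂ)) / (z + ((γ ^ (-r) : ℝ) : ℂ))))

/-- The function `V(z) = ∏_j V_j(z)`. -/
def Vfun (m : ℕ) (a : Fin m → ℝ) (r γ : ℝ) (z : ℂ) : ℂ :=
  ∏ j : Fin m, Vone r γ (a j) z


/-- Two-sided convolution `(f∘x)(t) = ∫_ℝ f(t-s) x(s) ds` (real-valued). -/
def convR (f x : ℝ → ℝ) (t : ℝ) : ℝ := ∫ s : ℝ, f (t - s) * x s

/-- A class of real-valued processes is `L²(ℝ)`-predictable in the weak sense. -/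
def WeakPredictableR (Xb : Set (ℝ → ℝ)) : Prop :=
  ∀ κ : ℝ → ℝ, IsKclass κ →
    ∃ κh : ℕ → ℝ → ℝ, (∀ j, IsKhatClass (κh j)) ∧
      ∀ x ∈ Xb, Tendsto
        (fun j : ℕ => eLpNorm (fun t : ℝ => convR κ x t - convR (κh j) x t) 2 (volume : Measure ℝ))
        atTop (nhds 0)

/-!
Put `y = x - x'`. For `a > 0` the anticausal kernel `κ(t) = e^{a t}` (`t ≤ 0`) lies in `𝒦`, while
every causal `κ̂` satisfies `κ̂∘x = κ̂∘x'` on `(-∞, s]`; so weak predictability forces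
`κ∘x = κ∘x'` a.e. on `(-∞, s]`. Evaluated at a single `t ≤ s` this says
`∫_{u > s} e^{-a u} y(u) du = 0` for all `a > 0`. After the substitution `v = e^{-u}` these are the
moments of a function on `[0, e^{-s}]`, so by Weierstrass approximation `y` integrates to zero
against every test function supported in `(s, ∞)`, i.e. `y = 0` a.e. on `(s, ∞)`.
-/

open scoped Topology

def expKernel (a : ℝ) : ℝ → ℝ := (Set.Iic 0).indicator fun t => Real.exp (a * t)

lemma integrable_expKernel {a : ℝ} (ha : 0 < a) : Integrable (expKernel a) :=
  (integrable_indicator_iff measurableSet_Iic).2 (integrableOn_exp_mul_Iic ha 0)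

lemma FT_expKernel {a : ℝ} (ha : 0 < a) (ω : ℝ) :
    FT (fun t => (expKernel a t : ℂ)) ω = 1 / (a - I * ω) := by
  have hre : 0 < ((a : ℂ) - I * ω).re := by simpa using ha
  have hintegrand : (fun t : ℝ => cexp (-(I * ω * t)) * (expKernel a t : ℂ))
      = (Set.Iic 0).indicator fun t : ℝ => cexp ((a - I * ω) * t) := by
    ext t
    by_cases ht : t ∈ Set.Iic (0 : ℝ)
    · simp only [expKernel, Set.indicator_of_mem ht, ofReal_exp, ← Complex.exp_add]
      push_cast
      ring_nf
    · simp [expKernel, Set.indicator_of_notMem ht]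
  rw [FT, hintegrand, integral_indicator measurableSet_Iic, integral_exp_mul_complex_Iic hre]
  simp

lemma isKclass_expKernel {a : ℝ} (ha : 0 < a) : IsKclass (expKernel a) := by
  refine ⟨fun t ht => Set.indicator_of_notMem (Set.notMem_Iic.2 ht) _,
    (integrable_expKernel ha).ofReal, 1, one_pos, fun _ => a, Polynomial.C (-1), fun _ => ha, ?_,
    fun ω => ?_⟩
  · rw [Polynomial.degree_C (by norm_num)]
    exact_mod_cast zero_lt_one
  · rw [FT_expKernel ha, Polynomial.eval_C, Fin.prod_univ_one, ← neg_sub, div_neg, neg_div]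

lemma convR_expKernel (a : ℝ) (z : ℝ → ℝ) (t : ℝ) :
    convR (expKernel a) z t = Real.exp (a * t) * ∫ u in Set.Ioi t, Real.exp (-(a * u)) * z u := by
  have hintegrand : (fun u => expKernel a (t - u) * z u)
      = (Set.Ici t).indicator fun u => Real.exp (a * t) * (Real.exp (-(a * u)) * z u) := by
    ext u
    by_cases hu : t ≤ u
    · simp only [expKernel, Set.indicator_of_mem (Set.mem_Iic.2 (sub_nonpos.2 hu)),
        Set.indicator_of_mem (Set.mem_Ici.2 hu), ← mul_assoc, ← Real.exp_add]
      ring_nf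
    · simp [expKernel, hu]
  rw [convR, hintegrand, integral_indicator measurableSet_Ici, integral_const_mul,
    integral_Ici_eq_integral_Ioi]

lemma convR_eq_of_causal {κ x x' : ℝ → ℝ} {s : ℝ} (hκ : ∀ t < 0, κ t = 0)
    (hpast : ∀ᵐ u, u ≤ s → x u = x' u) {t : ℝ} (ht : t ≤ s) :
    convR κ x t = convR κ x' t := by
  refine integral_congr_ae ?_
  filter_upwards [hpast] with u hu
  rcases le_or_gt u t with hut | htu
  · rw [hu (hut.trans ht)]
  · simp [hκ _ (sub_neg.2 htu)]

lemma convR_congr_ae {κ κ' x x' : ℝ → ℝ} (hκ : κ =ᵐ[volume] κ') (hx : x =ᵐ[volume] x') :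
    convR κ x = convR κ' x' := by
  ext t
  refine integral_congr_ae ?_
  have hκt : (fun u => κ (t - u)) =ᵐ[volume] fun u => κ' (t - u) :=
    (Measure.measurePreserving_sub_left volume t).quasiMeasurePreserving.ae_eq_comp hκ
  filter_upwards [hκt, hx] with u h1 h2
  rw [h1, h2]

lemma aestronglyMeasurable_convR {κ x : ℝ → ℝ} (hκ : AEMeasurable κ) (hx : AEMeasurable x) :
    AEStronglyMeasurable (convR κ x) := by
  rw [convR_congr_ae hκ.ae_eq_mk hx.ae_eq_mk]
  exact ((hκ.measurable_mk.comp measurable_sub).mul (hx.measurable_mk.comp measurable_snd))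
    |>.stronglyMeasurable.integral_prod_right'.aestronglyMeasurable

lemma aemeasurable_of_aestronglyMeasurable_ofReal {f : ℝ → ℝ}
    (hf : AEStronglyMeasurable (fun t => (f t : ℂ))) : AEMeasurable f :=
  Complex.measurable_re.comp_aemeasurable hf.aemeasurable

lemma ae_convR_eq_of_weakPredictableR {Xb : Set (ℝ → ℝ)}
    (hL2 : ∀ x ∈ Xb, MemLp x 2) (hpred : WeakPredictableR Xb) {κ : ℝ → ℝ} (hκ : IsKclass κ)
    {x x' : ℝ → ℝ} (hx : x ∈ Xb) (hx' : x' ∈ Xb) {s : ℝ} (hpast : ∀ᵐ t, t ≤ s → x t = x' t) :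
    ∀ᵐ t, t ≤ s → convR κ x t = convR κ x' t := by
  obtain ⟨κh, hκh, hlim⟩ := hpred κ hκ
  have hκm : AEMeasurable κ := aemeasurable_of_aestronglyMeasurable_ofReal hκ.2.1.1
  let err (j : ℕ) (z : ℝ → ℝ) : ℝ → ℝ := fun t => convR κ z t - convR (κh j) z t
  have herr : ∀ j, ∀ z ∈ Xb, AEStronglyMeasurable (err j z) := fun j z hz =>
    (aestronglyMeasurable_convR hκm (hL2 z hz).1.aemeasurable).sub
      (aestronglyMeasurable_convR (aemeasurable_of_aestronglyMeasurable_ofReal (hκh j).2.1.1)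
        (hL2 z hz).1.aemeasurable)
  let Δ : ℝ → ℝ := fun t => convR κ x t - convR κ x' t
  have hle : ∀ j,
      eLpNorm ((Set.Iic s).indicator Δ) 2 ≤ eLpNorm (err j x) 2 + eLpNorm (err j x') 2 := by
    intro j
    have hcausal : (Set.Iic s).indicator Δ = (Set.Iic s).indicator (err j x - err j x') :=
      Set.indicator_congr fun t ht => by
        simp only [Δ, err, Pi.sub_apply, convR_eq_of_causal (hκh j).1 hpast ht]
        ring
    rw [hcausal]
    exact (eLpNorm_indicator_le _).trans
      (eLpNorm_sub_le (herr j x hx) (herr j x' hx') one_le_two)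
  have hzero : eLpNorm ((Set.Iic s).indicator Δ) 2 volume = 0 :=
    le_antisymm (ge_of_tendsto' (by simpa using (hlim x hx).add (hlim x' hx')) hle) bot_le
  have hΔ : AEStronglyMeasurable Δ :=
    (aestronglyMeasurable_convR hκm (hL2 x hx).1.aemeasurable).sub
      (aestronglyMeasurable_convR hκm (hL2 x' hx').1.aemeasurable)
  filter_upwards [(eLpNorm_eq_zero_iff (hΔ.indicator measurableSet_Iic) two_ne_zero).1 hzero]
    with t ht hts
  simpa [Δ, hts, sub_eq_zero] using ht

lemma exists_le_of_ae_imp {p : ℝ → Prop} {s : ℝ} (h : ∀ᵐ t, t ≤ s → p t) : ∃ t ≤ s, p t := by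
  by_contra! hp
  have hnull : volume (Set.Iic s) = 0 :=
    measure_eq_zero_iff_ae_notMem.2 (h.mono fun t ht hts => hp t hts (ht hts))
  simp [Real.volume_Iic] at hnull

lemma integrableOn_exp_neg_mul_mul {z : ℝ → ℝ} (hz : MemLp z 2) {c : ℝ} (hc : 0 < c) (t : ℝ) :
    IntegrableOn (fun u => Real.exp (-(c * u)) * z u) (Set.Ioi t) := by
  have hexp : MemLp (fun u => Real.exp (-(c * u))) 2 (volume.restrict (Set.Ioi t)) := by
    refine (memLp_two_iff_integrable_sq (by fun_prop)).2 ?_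
    have hsq : (fun u => Real.exp (-(c * u)) ^ 2) = fun u => Real.exp (-(2 * c) * u) := by
      ext u
      rw [← Real.exp_nat_mul]
      push_cast
      ring_nf
    exact hsq ▸ integrableOn_exp_mul_Ioi (by linarith) t
  exact hexp.integrable_mul (hz.restrict _)

lemma setIntegral_exp_neg_mul_sub_eq_zero_of_weakPredictableR {Xb : Set (ℝ → ℝ)}
    (hL2 : ∀ x ∈ Xb, MemLp x 2) (hpred : WeakPredictableR Xb) {x x' : ℝ → ℝ} (hx : x ∈ Xb)
    (hx' : x' ∈ Xb) {s : ℝ} (hpast : ∀ᵐ t, t ≤ s → x t = x' t) {a : ℝ} (ha : 0 < a) :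
    ∫ u in Set.Ioi s, Real.exp (-(a * u)) * (x u - x' u) = 0 := by
  obtain ⟨t, hts, ht⟩ := exists_le_of_ae_imp
    (ae_convR_eq_of_weakPredictableR hL2 hpred (isKclass_expKernel ha) hx hx' hpast)
  rw [convR_expKernel, convR_expKernel] at ht
  have hpast_Ioi :
      ∀ᵐ u, u ∈ Set.Ioi t \ Set.Ioi s → Real.exp (-(a * u)) * (x u - x' u) = 0 := by
    filter_upwards [hpast] with u hu hmem
    rw [hu (not_lt.1 hmem.2), sub_self, mul_zero]
  calc ∫ u in Set.Ioi s, Real.exp (-(a * u)) * (x u - x' u)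
      = ∫ u in Set.Ioi t, Real.exp (-(a * u)) * (x u - x' u) :=
        (setIntegral_eq_of_subset_of_ae_sdiff_eq_zero measurableSet_Ioi.nullMeasurableSet
          (Set.Ioi_subset_Ioi hts) hpast_Ioi).symm
    _ = (∫ u in Set.Ioi t, Real.exp (-(a * u)) * x u)
          - ∫ u in Set.Ioi t, Real.exp (-(a * u)) * x' u := by
        simp_rw [mul_sub]
        exact integral_sub (integrableOn_exp_neg_mul_mul (hL2 x hx) ha t)
          (integrableOn_exp_neg_mul_mul (hL2 x' hx') ha t)
    _ = 0 := sub_eq_zero.2 (mul_left_cancel₀ (Real.exp_ne_zero _) ht)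

section LaplaceUniqueness

variable {y : ℝ → ℝ} {s : ℝ}

lemma integrableOn_exp_neg_mul_comp_mul (hy : MemLp y 2) {Ψ : ℝ → ℝ} (hΨ : Continuous Ψ) :
    IntegrableOn (fun u => Real.exp (-u) * Ψ (Real.exp (-u)) * y u) (Set.Ioi s) := by
  obtain ⟨M, hM⟩ := isCompact_Icc.exists_bound_of_continuousOn
    (hΨ.continuousOn (s := Set.Icc 0 (Real.exp (-s))))
  have hbound : ∀ᵐ u ∂volume.restrict (Set.Ioi s), ‖Ψ (Real.exp (-u))‖ ≤ M :=
    (ae_restrict_mem measurableSet_Ioi).mono fun u hu =>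
      hM _ ⟨(Real.exp_pos _).le, Real.exp_le_exp.2 (neg_le_neg (le_of_lt hu))⟩
  have hwy : IntegrableOn (fun u => Real.exp (-u) * y u) (Set.Ioi s) := by
    simpa using integrableOn_exp_neg_mul_mul hy one_pos s
  refine (hwy.bdd_mul (by fun_prop) hbound).congr (Eventually.of_forall fun u => ?_)
  ring

lemma setIntegral_exp_neg_mul_eval_mul_eq_zero (hy : MemLp y 2)
    (hmom : ∀ n : ℕ, ∫ u in Set.Ioi s, Real.exp (-((n + 1) * u)) * y u = 0) (q : Polynomial ℝ) :
    ∫ u in Set.Ioi s, Real.exp (-u) * q.eval (Real.exp (-u)) * y u = 0 := by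
  have hexpand : (fun u => Real.exp (-u) * q.eval (Real.exp (-u)) * y u) = fun u =>
      ∑ i ∈ Finset.range (q.natDegree + 1), q.coeff i * (Real.exp (-((i + 1) * u)) * y u) := by
    ext u
    rw [Polynomial.eval_eq_sum_range, Finset.mul_sum, Finset.sum_mul]
    refine Finset.sum_congr rfl fun i _ => ?_
    rw [← Real.exp_nat_mul, mul_left_comm, ← Real.exp_add]
    ring_nf
  rw [hexpand, integral_finsetSum _ fun i _ =>
    (integrableOn_exp_neg_mul_mul hy (by positivity) s).const_mul _]
  simp [integral_const_mul, hmom]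

lemma setIntegral_exp_neg_mul_comp_mul_eq_zero (hy : MemLp y 2)
    (hmom : ∀ n : ℕ, ∫ u in Set.Ioi s, Real.exp (-((n + 1) * u)) * y u = 0) {Ψ : ℝ → ℝ}
    (hΨ : Continuous Ψ) :
    ∫ u in Set.Ioi s, Real.exp (-u) * Ψ (Real.exp (-u)) * y u = 0 := by
  set C := ∫ u in Set.Ioi s, Real.exp (-u) * |y u|
  have hw : IntegrableOn (fun u => Real.exp (-u) * |y u|) (Set.Ioi s) := by
    simpa using integrableOn_exp_neg_mul_mul hy.abs one_pos s
  have happrox :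
      ∀ ε > 0, |∫ u in Set.Ioi s, Real.exp (-u) * Ψ (Real.exp (-u)) * y u| ≤ ε * C := by
    intro ε hε
    obtain ⟨q, hq⟩ :=
      exists_polynomial_near_of_continuousOn 0 (Real.exp (-s)) Ψ hΨ.continuousOn ε hε
    rw [← sub_zero (∫ u in Set.Ioi s, _), ← setIntegral_exp_neg_mul_eval_mul_eq_zero hy hmom q,
      ← integral_sub (integrableOn_exp_neg_mul_comp_mul hy hΨ)
        (integrableOn_exp_neg_mul_comp_mul hy q.continuous),
      ← integral_const_mul, ← Real.norm_eq_abs]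
    refine norm_integral_le_of_norm_le (hw.const_mul ε) ?_
    filter_upwards [ae_restrict_mem measurableSet_Ioi] with u hu
    have hqu := hq _ ⟨(Real.exp_pos _).le, Real.exp_le_exp.2 (neg_le_neg (le_of_lt hu))⟩
    calc ‖Real.exp (-u) * Ψ (Real.exp (-u)) * y u - Real.exp (-u) * q.eval (Real.exp (-u)) * y u‖
        = Real.exp (-u) * |q.eval (Real.exp (-u)) - Ψ (Real.exp (-u))| * |y u| := by
          rw [Real.norm_eq_abs, ← sub_mul, ← mul_sub, abs_mul, abs_mul,
            abs_of_pos (Real.exp_pos _), abs_sub_comm]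
      _ ≤ Real.exp (-u) * ε * |y u| := by gcongr
      _ = ε * (Real.exp (-u) * |y u|) := by ring
  have hlim : Tendsto (fun ε => ε * C) (𝓝[>] 0) (𝓝 0) := by
    simpa using (tendsto_nhdsWithin_of_tendsto_nhds (tendsto_id.mul_const C) :
      Tendsto (fun ε : ℝ => ε * C) (𝓝[>] 0) (𝓝 (0 * C)))
  exact abs_nonpos_iff.1 (ge_of_tendsto hlim (eventually_nhdsWithin_of_forall happrox))

-- At `v = 0` the function takes the junk value `g (-log 0) * 0⁻¹ = 0`, which is also its limit.
lemma continuous_comp_neg_log_mul_inv {g : ℝ → ℝ} (hg : Continuous g)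
    (hgc : HasCompactSupport g) : Continuous fun v => g (-Real.log v) * v⁻¹ := by
  refine continuous_iff_continuousAt.2 fun v => ?_
  rcases eq_or_ne v 0 with rfl | hv
  · have hsupp : ∀ᶠ u in cocompact ℝ, u ∉ tsupport g := hgc.isCompact.compl_mem_cocompact
    have hg_atTop : ∀ᶠ u in atTop, g u = 0 :=
      (hsupp.filter_mono atTop_le_cocompact).mono fun u hu => image_eq_zero_of_notMem_tsupport hu
    have hzero : ∀ᶠ v in 𝓝[≠] (0 : ℝ), g (-Real.log v) * v⁻¹ = 0 :=
      ((tendsto_neg_atBot_atTop.comp Real.tendsto_log_nhdsNE_zero).eventually hg_atTop).mono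
        fun v (hv : g (-Real.log v) = 0) => by rw [hv, zero_mul]
    rw [← continuousWithinAt_compl_self, ContinuousWithinAt, inv_zero, mul_zero]
    exact tendsto_const_nhds.congr' (hzero.mono fun v hv => hv.symm)
  · exact (hg.continuousAt.comp (Real.continuousAt_log hv).neg).mul (continuousAt_inv₀ hv)
theorem ae_eq_zero_of_setIntegral_exp_neg_mul_eq_zero (hy : MemLp y 2)
    (hmom : ∀ n : ℕ, ∫ u in Set.Ioi s, Real.exp (-((n + 1) * u)) * y u = 0) :
    ∀ᵐ u, u ∈ Set.Ioi s → y u = 0 := by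
  refine isOpen_Ioi.ae_eq_zero_of_integral_contDiff_smul_eq_zero
    ((hy.locallyIntegrable one_le_two).locallyIntegrableOn _) fun g hg hgc hsupp => ?_
  let Ψ : ℝ → ℝ := fun v => g (-Real.log v) * v⁻¹
  have hg_eq : ∀ u, g u = Real.exp (-u) * Ψ (Real.exp (-u)) := fun u => by
    simp only [Ψ, Real.log_exp, neg_neg]
    field_simp
  calc ∫ u, g u • y u = ∫ u in Set.Ioi s, g u * y u :=
        (setIntegral_eq_integral_of_forall_compl_eq_zero fun u hu => by
          simp [image_eq_zero_of_notMem_tsupport fun h => hu (hsupp h)]).symm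
    _ = ∫ u in Set.Ioi s, Real.exp (-u) * Ψ (Real.exp (-u)) * y u :=
        setIntegral_congr_fun measurableSet_Ioi fun u _ => by rw [hg_eq u]
    _ = 0 := setIntegral_exp_neg_mul_comp_mul_eq_zero hy hmom
        (continuous_comp_neg_log_mul_inv hg.continuous hgc)

end LaplaceUniqueness

/-- Proposition 1(1): if a class of real-valued `L²` processes is weakly `L²`-predictable,
then every process in the class is uniquely defined by its past `x|_{t ≤ s}`, for any `s`. -/
theorem weak_predictability_implies_past_determines (Xb : Set (ℝ → ℝ))
    (hL2 : ∀ x ∈ Xb, MemLp x 2 (volume : Measure ℝ))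
    (hpred : WeakPredictableR Xb) (s : ℝ) (x x' : ℝ → ℝ) (hx : x ∈ Xb) (hx' : x' ∈ Xb)
    (hpast : ∀ᵐ t : ℝ, t ≤ s → x t = x' t) :
    ∀ᵐ t : ℝ, x t = x' t := by
  have hfuture : ∀ᵐ t, t ∈ Set.Ioi s → x t - x' t = 0 :=
    ae_eq_zero_of_setIntegral_exp_neg_mul_eq_zero ((hL2 x hx).sub (hL2 x' hx')) fun _ =>
      setIntegral_exp_neg_mul_sub_eq_zero_of_weakPredictableR hL2 hpred hx hx' hpast (by positivity)
  filter_upwards [hpast, hfuture] with t hpast_t hfuture_t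
  rcases le_or_gt t s with hts | hst
  · exact hpast_t hts
  · exact sub_eq_zero.1 (hfuture_t hst)
end
end

section
/- Let s ∈ ℝ and let f ∈ L²((s,+∞)) be such that ∫_s^∞ e^{−λ(t−s)} f(t) dt = 0 for every λ > 0 (these integrals converge absolutely since e^{−λ(t−s)} ∈ L²((s,+∞))). Then f = 0 almost everywhere on (s,+∞). -/
open MeasureTheory Filter Complex
open scoped ENNReal NNReal

/-!
Put `F t = e^{-(t-s)} f(t)`, which is integrable on `(s, ∞)` by Cauchy–Schwarz. The hypothesis
says that all moments `∫ u^n F` of `F` against `u(t) = e^{-(t-s)} ∈ (0, 1]` vanish. Every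
compactly supported test function `φ` is of the form `H ∘ u` with `H` continuous on `[0, 1]`
(`H(x) = φ(s - log x)`, extended by `0` at `x ≤ 0`), and `H` is a uniform limit of polynomials by
Weierstrass, so `∫ φ F = 0`. Hence `F = 0` a.e., and so is `f`.
-/

open Set Topology Polynomial

section Moments

variable {α E : Type*} [MeasurableSpace α] [NormedAddCommGroup E] [NormedSpace ℝ E]
  {μ : Measure α} {F : α → E} {u : α → ℝ}

lemma MeasureTheory.Integrable.comp_smul_of_mem_Icc (hF : Integrable F μ)
    (hu : AEStronglyMeasurable u μ) (hu01 : ∀ᵐ a ∂μ, u a ∈ Icc 0 1) {G : ℝ → ℝ}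
    (hG : Continuous G) :
    Integrable (fun a => G (u a) • F a) μ := by
  obtain ⟨C, hC⟩ := isCompact_Icc.exists_bound_of_continuousOn hG.continuousOn
  exact hF.bdd_smul C (hG.comp_aestronglyMeasurable hu)
    (by filter_upwards [hu01] with a ha using hC _ ha)

lemma integral_eval_smul_eq_zero_of_moments (hF : Integrable F μ)
    (hu : AEStronglyMeasurable u μ) (hu01 : ∀ᵐ a ∂μ, u a ∈ Icc 0 1)
    (hmom : ∀ n : ℕ, ∫ a, u a ^ n • F a ∂μ = 0) (p : ℝ[X]) :
    ∫ a, p.eval (u a) • F a ∂μ = 0 := by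
  simp_rw [eval_eq_sum_range, Finset.sum_smul, mul_smul]
  rw [integral_finsetSum _ fun i _ => ?_]
  · simp [integral_smul, hmom]
  · exact (hF.comp_smul_of_mem_Icc hu hu01 (continuous_pow i)).smul (p.coeff i)

lemma integral_comp_smul_eq_zero_of_moments (hF : Integrable F μ)
    (hu : AEStronglyMeasurable u μ) (hu01 : ∀ᵐ a ∂μ, u a ∈ Icc 0 1)
    (hmom : ∀ n : ℕ, ∫ a, u a ^ n • F a ∂μ = 0) {H : ℝ → ℝ} (hH : Continuous H) :
    ∫ a, H (u a) • F a ∂μ = 0 := by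
  set C := ∫ a, ‖F a‖ ∂μ
  suffices h : ∀ ε > 0, ‖∫ a, H (u a) • F a ∂μ‖ ≤ ε * C by
    have hlim : Tendsto (fun ε : ℝ => ε * C) (𝓝[>] 0) (𝓝 0) := by
      simpa using ((tendsto_id (x := 𝓝 (0 : ℝ))).mul_const C).mono_left nhdsWithin_le_nhds
    exact norm_le_zero_iff.1 (ge_of_tendsto hlim (eventually_nhdsWithin_of_forall h))
  intro ε hε
  obtain ⟨p, hp⟩ := exists_polynomial_near_of_continuousOn 0 1 H hH.continuousOn ε hε
  have hbound : ∀ᵐ a ∂μ, ‖(H (u a) - p.eval (u a)) • F a‖ ≤ ε * ‖F a‖ := by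
    filter_upwards [hu01] with a ha
    rw [norm_smul, Real.norm_eq_abs, abs_sub_comm]
    exact mul_le_mul_of_nonneg_right (hp _ ha).le (norm_nonneg _)
  calc ‖∫ a, H (u a) • F a ∂μ‖
        = ‖∫ a, (H (u a) - p.eval (u a)) • F a ∂μ‖ := by
        simp_rw [sub_smul]
        rw [integral_sub (hF.comp_smul_of_mem_Icc hu hu01 hH)
          (hF.comp_smul_of_mem_Icc hu hu01 p.continuous),
          integral_eval_smul_eq_zero_of_moments hF hu hu01 hmom, sub_zero]
    _ ≤ ∫ a, ε * ‖F a‖ ∂μ := norm_integral_le_of_norm_le (hF.norm.const_mul ε) hbound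
    _ = ε * C := integral_const_mul ε _

end Moments

lemma exists_continuous_comp_exp_neg_sub_eq (s : ℝ) {φ : ℝ → ℝ} (hφ : Continuous φ)
    (hφ0 : Tendsto φ atTop (𝓝 0)) :
    ∃ H : ℝ → ℝ, Continuous H ∧ ∀ t, H (Real.exp (-(t - s))) = φ t := by
  set H : ℝ → ℝ := fun x => if 0 < x then φ (s - Real.log x) else 0
  refine ⟨H, continuous_iff_continuousAt.2 fun x => ?_, fun t => by simp [H, Real.exp_pos]⟩
  have hH_nonpos : ∀ y ≤ 0, H y = 0 := fun y hy => if_neg hy.not_gt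
  have hH_pos : ∀ y > 0, H y = φ (s - Real.log y) := fun y hy => if_pos hy
  rcases lt_trichotomy x 0 with hx | rfl | hx
  · refine (continuousAt_const (y := 0)).congr ?_
    filter_upwards [Iio_mem_nhds hx] with y hy using (hH_nonpos y hy.le).symm
  · refine continuousAt_iff_continuous_left_right.2 ⟨?_, ?_⟩
    · exact continuousWithinAt_const.congr (fun y hy => hH_nonpos y hy) (hH_nonpos 0 le_rfl)
    · rw [← continuousWithinAt_Ioi_iff_Ici, ContinuousWithinAt, hH_nonpos 0 le_rfl]
      have hlog : Tendsto (fun y => s - Real.log y) (𝓝[>] 0) atTop :=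
        tendsto_atTop_add_const_left _ s
          (tendsto_neg_atBot_atTop.comp Real.tendsto_log_nhdsGT_zero)
      exact (hφ0.comp hlog).congr'
        (eventually_nhdsWithin_of_forall fun y hy => (hH_pos y hy).symm)
  · refine (hφ.continuousAt.comp
      ((continuousAt_const (y := s)).sub (Real.continuousAt_log hx.ne'))).congr ?_
    filter_upwards [Ioi_mem_nhds hx] with y hy using (hH_pos y hy).symm

theorem ae_eq_zero_of_integral_exp_neg_sub_pow_smul_eq_zero {E : Type*} [NormedAddCommGroup E]
    [NormedSpace ℝ E] [CompleteSpace E] {μ : Measure ℝ} {F : ℝ → E} (s : ℝ)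
    (hF : Integrable F μ) (hs : ∀ᵐ t ∂μ, s ≤ t)
    (hmom : ∀ n : ℕ, ∫ t, Real.exp (-(t - s)) ^ n • F t ∂μ = 0) :
    ∀ᵐ t ∂μ, F t = 0 := by
  refine ae_eq_zero_of_integral_contDiff_smul_eq_zero hF.locallyIntegrable fun φ hφ hφc => ?_
  obtain ⟨H, hH, hHφ⟩ := exists_continuous_comp_exp_neg_sub_eq s hφ.continuous
    (hφc.is_zero_at_infty.mono_left atTop_le_cocompact)
  have hu01 : ∀ᵐ t ∂μ, Real.exp (-(t - s)) ∈ Icc 0 1 := by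
    filter_upwards [hs] with t ht
    exact ⟨(Real.exp_pos _).le, Real.exp_le_one_iff.2 (by linarith)⟩
  simp_rw [← hHφ]
  exact integral_comp_smul_eq_zero_of_moments hF (by fun_prop) hu01 hmom hH

lemma integrableOn_exp_neg_mul_sub (s : ℝ) {c : ℝ} (hc : 0 < c) :
    IntegrableOn (fun t => Real.exp (-(c * (t - s)))) (Ioi s) := by
  refine IntegrableOn.congr_fun
    ((exp_neg_integrableOn_Ioi s hc).const_mul (Real.exp (c * s))) (fun t _ => ?_)
    measurableSet_Ioi
  rw [← Real.exp_add]
  ring_nf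

lemma memLp_two_exp_neg_sub (s : ℝ) :
    MemLp (fun t => Real.exp (-(t - s))) 2 (volume.restrict (Ioi s)) := by
  refine (memLp_two_iff_integrable_sq (by fun_prop)).2 ?_
  refine (integrableOn_exp_neg_mul_sub s two_pos).congr_fun (fun t _ => ?_) measurableSet_Ioi
  rw [sq, ← Real.exp_add]
  ring_nf

/-- Completeness of the exponentials `{e^{-λ(t-s)} : λ > 0}` in `L²((s,∞))` (via the
Müntz–Szász theorem): if `f ∈ L²((s,∞))` is orthogonal to all of them, then `f = 0` a.e. -/
theorem exponentials_complete_L2 (s : ℝ) (f : ℝ → ℂ)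
    (hf : MemLp f 2 (volume.restrict (Set.Ioi s)))
    (h : ∀ lam : ℝ, 0 < lam →
      (∫ t in Set.Ioi s, (Real.exp (-(lam * (t - s))) : ℂ) * f t) = 0) :
    ∀ᵐ t ∂(volume.restrict (Set.Ioi s)), f t = 0 := by
  have hF : Integrable (fun t => Real.exp (-(t - s)) • f t) (volume.restrict (Ioi s)) :=
    memLp_one_iff_integrable.1 (hf.smul (memLp_two_exp_neg_sub s) (r := 1))
  have hmom (n : ℕ) :
      ∫ t in Ioi s, Real.exp (-(t - s)) ^ n • Real.exp (-(t - s)) • f t = 0 := by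
    convert h (n + 1) n.cast_add_one_pos using 3 with t
    rw [smul_smul, ← pow_succ, ← Real.exp_nat_mul, Complex.real_smul]
    push_cast
    ring_nf
  have hs : ∀ᵐ t ∂(volume.restrict (Ioi s)), s ≤ t :=
    ae_restrict_of_forall_mem measurableSet_Ioi fun _ ht => le_of_lt ht
  filter_upwards [ae_eq_zero_of_integral_exp_neg_sub_pow_smul_eq_zero s hF hs hmom] with t ht
  exact (smul_eq_zero.1 ht).resolve_left (Real.exp_pos _).ne'
end

section
/- Fix m > 0, a_1,…,a_m > 0, r > 0, γ > 0 and a complex polynomial d with deg d < m, and let K(z) = d(z)/∏_{j=1}^m (z − a_j). Then the function V is holomorphic and bounded on ℂ⁺ (i.e. V ∈ H^∞ of the half-plane), and K̂(z) = K(z)V(z) is holomorphic on ℂ⁺ (the poles of K at a_j being removable for K̂) with sup_{z∈ℂ⁺}|K̂(z)| < ∞ and sup_{s>0} ∫_ℝ |K̂(s+iω)|² dω < ∞ (i.e. K̂ ∈ H^∞ ∩ H² of the half-plane). -/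
open MeasureTheory Filter Complex
open scoped ENNReal NNReal

noncomputable section

/-!
Write `c = γ^{-r}` and `u_j(z) = γ (z - a_j) / (z + c)`, so that `V_j = 1 - exp (-u_j)`.
On `Re z ≥ 0` we have `c ≤ |z + c|` and `|z| ≤ |z + c|`, so `|u_j|` is bounded and so is `V_j`.
Moreover `V_j(z) / (z - a_j) = γ / (z + c) * φ(u_j(z))` with the entire function
`φ(u) = (1 - exp (-u)) / u`, which is bounded by `1 + exp |u|`. This removes the pole at `a_j`
and gives `|V_j(z) / (z - a_j)| ≲ 1 / |z + c|`. As `deg d < m`, `|d(z)| ≲ |z + c| ^ (m - 1)`,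
hence `|K̂(z)| ≲ 1 / |z + c|`: bounded, and square integrable on every vertical line
`Re z = s > 0` with a bound `∫ dω / (c² + ω²) = π / c` independent of `s`.
-/

def oneSubExpNegSlope : ℂ → ℂ := dslope (fun u => 1 - Complex.exp (-u)) 0

lemma differentiable_oneSubExpNegSlope : Differentiable ℂ oneSubExpNegSlope := by
  rw [← differentiableOn_univ]
  exact (Complex.differentiableOn_dslope Filter.univ_mem).2 (by fun_prop)

lemma oneSubExpNegSlope_zero : oneSubExpNegSlope 0 = 1 := by
  have h : HasDerivAt (fun u : ℂ => 1 - Complex.exp (-u)) 1 0 := by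
    simpa using ((hasDerivAt_neg (0 : ℂ)).cexp).const_sub 1
  rw [oneSubExpNegSlope, dslope_same, h.deriv]

lemma oneSubExpNegSlope_of_ne {u : ℂ} (hu : u ≠ 0) :
    oneSubExpNegSlope u = (1 - Complex.exp (-u)) / u := by
  rw [oneSubExpNegSlope, dslope_of_ne _ hu, slope_def_field]
  simp

lemma norm_one_sub_exp_neg_le (u : ℂ) : ‖1 - Complex.exp (-u)‖ ≤ 1 + Real.exp ‖u‖ := by
  refine (norm_sub_le _ _).trans ?_
  rw [norm_one, Complex.norm_exp, Complex.neg_re]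
  gcongr
  exact (neg_le_abs u.re).trans (Complex.abs_re_le_norm u)

lemma norm_oneSubExpNegSlope_le (u : ℂ) : ‖oneSubExpNegSlope u‖ ≤ 1 + Real.exp ‖u‖ := by
  have two_le : 2 ≤ 1 + Real.exp ‖u‖ := by linarith [Real.one_le_exp (norm_nonneg u)]
  rcases eq_or_ne u 0 with rfl | hu
  · simp only [oneSubExpNegSlope_zero, norm_one]
    linarith
  have hu' : 0 < ‖u‖ := norm_pos_iff.2 hu
  rw [oneSubExpNegSlope_of_ne hu, norm_div, div_le_iff₀ hu']
  rcases le_or_gt ‖u‖ 1 with hsmall | hlarge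
  · calc ‖1 - Complex.exp (-u)‖ = ‖Complex.exp (-u) - 1‖ := norm_sub_rev _ _
      _ ≤ 2 * ‖-u‖ := Complex.norm_exp_sub_one_le (by rwa [norm_neg])
      _ ≤ (1 + Real.exp ‖u‖) * ‖u‖ := by rw [norm_neg]; gcongr
  · calc ‖1 - Complex.exp (-u)‖ ≤ 1 + Real.exp ‖u‖ := norm_one_sub_exp_neg_le u
      _ ≤ (1 + Real.exp ‖u‖) * ‖u‖ := le_mul_of_one_le_right (by positivity) hlarge.le

section HalfPlane

variable {c : ℝ} {z : ℂ}

lemma le_norm_add_ofReal (hz : 0 ≤ z.re) : c ≤ ‖z + c‖ := by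
  have h := Complex.re_le_norm (z + c)
  rw [Complex.add_re, Complex.ofReal_re] at h
  linarith

lemma norm_le_norm_add_ofReal (hc : 0 ≤ c) (hz : 0 ≤ z.re) : ‖z‖ ≤ ‖z + c‖ := by
  rw [Complex.norm_def, Complex.norm_def]
  gcongr
  simp only [Complex.normSq_apply, Complex.add_re, Complex.add_im, Complex.ofReal_re,
    Complex.ofReal_im, add_zero]
  nlinarith [mul_nonneg hc hz]

lemma add_ofReal_ne_zero (hc : 0 < c) (hz : 0 ≤ z.re) : z + c ≠ 0 :=
  norm_pos_iff.1 (hc.trans_le (le_norm_add_ofReal hz))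

end HalfPlane

section Factor

variable {c γ a : ℝ} {z : ℂ}

variable (c γ a) in
/-- The exponent of `V_j`, with the shift `γ^{-r}` replaced by `c`. -/
def vExponent (z : ℂ) : ℂ := γ * (z - a) / (z + c)

variable (c γ a) in
/-- `(1 - exp (-vExponent c γ a z)) / (z - a)`, continued across `z = a`. -/
def vSlope (z : ℂ) : ℂ := γ / (z + c) * oneSubExpNegSlope (vExponent c γ a z)

variable (c γ a) in
def vBound : ℝ := 1 + Real.exp (|γ| * (1 + |a + c| / c))

lemma vBound_pos : 0 < vBound c γ a := by
  unfold vBound; positivity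

lemma norm_vExponent_le (hc : 0 < c) (hz : 0 ≤ z.re) :
    ‖vExponent c γ a z‖ ≤ |γ| * (1 + |a + c| / c) := by
  have hw : c ≤ ‖z + c‖ := le_norm_add_ofReal hz
  have hw' : 0 < ‖z + c‖ := hc.trans_le hw
  have hza : ‖z - a‖ ≤ ‖z + c‖ + |a + c| := by
    have h : z - a = (z + c) - ((a + c : ℝ) : ℂ) := by push_cast; ring
    rw [h]
    exact (norm_sub_le _ _).trans_eq (by rw [Complex.norm_real, Real.norm_eq_abs])
  rw [vExponent, norm_div, norm_mul, Complex.norm_real, Real.norm_eq_abs, mul_div_assoc]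
  gcongr
  calc ‖z - a‖ / ‖z + c‖ ≤ (‖z + c‖ + |a + c|) / ‖z + c‖ := by gcongr
    _ = 1 + |a + c| / ‖z + c‖ := by field_simp
    _ ≤ 1 + |a + c| / c := by gcongr

lemma norm_one_sub_exp_neg_vExponent_le (hc : 0 < c) (hz : 0 ≤ z.re) :
    ‖1 - Complex.exp (-vExponent c γ a z)‖ ≤ vBound c γ a :=
  (norm_one_sub_exp_neg_le _).trans (by unfold vBound; gcongr; exact norm_vExponent_le hc hz)

lemma norm_vSlope_le (hc : 0 < c) (hz : 0 ≤ z.re) :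
    ‖vSlope c γ a z‖ ≤ |γ| * vBound c γ a / ‖z + c‖ := by
  rw [vSlope, norm_mul, norm_div, Complex.norm_real, Real.norm_eq_abs, div_mul_eq_mul_div]
  gcongr
  exact (norm_oneSubExpNegSlope_le _).trans
    (by unfold vBound; gcongr; exact norm_vExponent_le hc hz)

lemma vSlope_eq (hγ : γ ≠ 0) (hw : z + c ≠ 0) (hza : z ≠ a) :
    vSlope c γ a z = (1 - Complex.exp (-vExponent c γ a z)) / (z - a) := by
  have hza' : z - a ≠ 0 := sub_ne_zero.2 hza
  have hγ' : (γ : ℂ) ≠ 0 := Complex.ofReal_ne_zero.2 hγ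
  have hu : vExponent c γ a z ≠ 0 := div_ne_zero (mul_ne_zero hγ' hza') hw
  rw [vSlope, oneSubExpNegSlope_of_ne hu, vExponent]
  field_simp

lemma differentiableOn_vExponent (hc : 0 < c) :
    DifferentiableOn ℂ (vExponent c γ a) {z | 0 < z.re} :=
  DifferentiableOn.div (by fun_prop) (by fun_prop) fun _ hz => add_ofReal_ne_zero hc hz.le

lemma differentiableOn_vSlope (hc : 0 < c) :
    DifferentiableOn ℂ (vSlope c γ a) {z | 0 < z.re} := by
  refine DifferentiableOn.mul ?_ ?_
  · exact DifferentiableOn.div (by fun_prop) (by fun_prop)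
      fun _ hz => add_ofReal_ne_zero hc hz.le
  · exact differentiable_oneSubExpNegSlope.comp_differentiableOn (differentiableOn_vExponent hc)

end Factor

section V

variable {r γ a : ℝ} {z : ℂ}

lemma differentiableOn_Vone (hγ : 0 < γ) : DifferentiableOn ℂ (Vone r γ a) {z | 0 < z.re} :=
  (differentiableOn_const 1).sub
    (differentiableOn_vExponent (Real.rpow_pos_of_pos hγ _)).neg.cexp

lemma norm_Vone_le (hγ : 0 < γ) (hz : 0 ≤ z.re) : ‖Vone r γ a z‖ ≤ vBound (γ ^ (-r)) γ a :=
  norm_one_sub_exp_neg_vExponent_le (Real.rpow_pos_of_pos hγ _) hz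

variable {m : ℕ} {a : Fin m → ℝ}

lemma differentiableOn_Vfun (hγ : 0 < γ) : DifferentiableOn ℂ (Vfun m a r γ) {z | 0 < z.re} :=
  DifferentiableOn.fun_finsetProd fun _ _ => differentiableOn_Vone hγ

lemma norm_Vfun_le (hγ : 0 < γ) (hz : 0 ≤ z.re) :
    ‖Vfun m a r γ z‖ ≤ ∏ j, vBound (γ ^ (-r)) γ (a j) := by
  rw [Vfun, norm_prod]
  exact Finset.prod_le_prod (fun j _ => norm_nonneg _) fun j _ => norm_Vone_le hγ hz

end V

lemma Polynomial.norm_eval_mul_le {𝕜 : Type*} [NormedField 𝕜] {d : Polynomial 𝕜} {m : ℕ}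
    (hd : d.degree < m) {x : 𝕜} {c σ : ℝ} (hc : 0 ≤ c) (hσ : 1 ≤ σ) (hx : ‖x‖ ≤ c * σ) :
    ‖d.eval x‖ * σ ≤ (∑ i ∈ Finset.range m, ‖d.coeff i‖ * c ^ i) * σ ^ m := by
  rcases eq_or_ne d 0 with rfl | hd0
  · simp only [eval_zero, norm_zero, zero_mul]; positivity
  rw [d.eval_eq_sum_range' ((natDegree_lt_iff_degree_lt hd0).2 hd) x]
  refine (mul_le_mul_of_nonneg_right (norm_sum_le _ _) (by linarith)).trans ?_
  rw [Finset.sum_mul, Finset.sum_mul]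
  refine Finset.sum_le_sum fun i hi => ?_
  have hi : i + 1 ≤ m := Finset.mem_range.1 hi
  calc ‖d.coeff i * x ^ i‖ * σ ≤ ‖d.coeff i‖ * (c * σ) ^ i * σ := by
        rw [norm_mul, norm_pow]; gcongr
    _ = ‖d.coeff i‖ * c ^ i * σ ^ (i + 1) := by ring
    _ ≤ ‖d.coeff i‖ * c ^ i * σ ^ m := by gcongr

section KernelExt

variable {ι : Type*} [Fintype ι] {c γ : ℝ} {a : ι → ℝ} {d : Polynomial ℂ} {z : ℂ}

variable (c γ a d) in
/-- The holomorphic extension of `z ↦ d z / ∏ j, (z - a j) * ∏ j, V_j z`. -/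
def kernelExt (z : ℂ) : ℂ := d.eval z * ∏ j, vSlope c γ (a j) z

lemma kernelExt_eq (hγ : γ ≠ 0) (hw : z + c ≠ 0) (hza : ∀ j, z ≠ a j) :
    kernelExt c γ a d z =
      (d.eval z / ∏ j, (z - a j)) * ∏ j, (1 - Complex.exp (-vExponent c γ (a j) z)) := by
  rw [kernelExt, Finset.prod_congr rfl fun j _ => vSlope_eq hγ hw (hza j), Finset.prod_div_distrib]
  ring

lemma differentiableOn_kernelExt (hc : 0 < c) :
    DifferentiableOn ℂ (kernelExt c γ a d) {z | 0 < z.re} :=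
  d.differentiable.differentiableOn.mul
    (DifferentiableOn.fun_finsetProd fun _ _ => differentiableOn_vSlope hc)

lemma exists_norm_kernelExt_le (hc : 0 < c) (hd : d.degree < Fintype.card ι) :
    ∃ K, 0 ≤ K ∧ ∀ z : ℂ, 0 ≤ z.re → ‖kernelExt c γ a d z‖ ≤ K / ‖z + c‖ := by
  set S := ∑ i ∈ Finset.range (Fintype.card ι), ‖d.coeff i‖ * c ^ i
  set L := fun j => |γ| * vBound c γ (a j) / c
  have hL : 0 ≤ ∏ j, L j :=
    Finset.prod_nonneg fun j _ => div_nonneg (mul_nonneg (abs_nonneg γ) vBound_pos.le) hc.le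
  refine ⟨S * (∏ j, L j) * c, mul_nonneg (mul_nonneg (by positivity) hL) hc.le, fun z hz => ?_⟩
  set σ := ‖z + c‖ / c
  have hw : c ≤ ‖z + c‖ := le_norm_add_ofReal hz
  have hw0 : ‖z + c‖ ≠ 0 := (hc.trans_le hw).ne'
  have hσ : 1 ≤ σ := (one_le_div hc).2 hw
  have hzσ : ‖z‖ ≤ c * σ := by
    rw [mul_div_cancel₀ _ hc.ne']; exact norm_le_norm_add_ofReal hc.le hz
  have hpoly := d.norm_eval_mul_le hd hc.le hσ hzσ
  have hslope : ∀ j, ‖vSlope c γ (a j) z‖ ≤ L j / σ := fun j =>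
    (norm_vSlope_le hc hz).trans_eq (by simp only [σ, L]; field_simp)
  have hprod : ∏ j, ‖vSlope c γ (a j) z‖ ≤ (∏ j, L j) / σ ^ Fintype.card ι := by
    rw [← Finset.card_univ, ← Finset.prod_const, ← Finset.prod_div_distrib]
    exact Finset.prod_le_prod (fun j _ => norm_nonneg _) fun j _ => hslope j
  have hSσ : 0 ≤ S * σ ^ Fintype.card ι := (mul_nonneg (norm_nonneg _) (by linarith)).trans hpoly
  rw [le_div_iff₀ (hc.trans_le hw), kernelExt, norm_mul, norm_prod]
  calc (‖d.eval z‖ * ∏ j, ‖vSlope c γ (a j) z‖) * ‖z + c‖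
      = (‖d.eval z‖ * σ) * (∏ j, ‖vSlope c γ (a j) z‖) * c := by
        simp only [σ]; field_simp
    _ ≤ (S * σ ^ Fintype.card ι) * ((∏ j, L j) / σ ^ Fintype.card ι) * c := by
        gcongr
    _ = S * (∏ j, L j) * c := by field_simp

end KernelExt

section SquareIntegral

variable {c : ℝ}

lemma inv_sq_add_sq_eq (hc : c ≠ 0) (ω : ℝ) :
    (c ^ 2 + ω ^ 2)⁻¹ = (c ^ 2)⁻¹ * (1 + (ω / c) ^ 2)⁻¹ := by
  field_simp

lemma integrable_inv_sq_add_sq (hc : c ≠ 0) : Integrable fun ω : ℝ => (c ^ 2 + ω ^ 2)⁻¹ := by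
  simp_rw [inv_sq_add_sq_eq hc]
  exact (integrable_inv_one_add_sq.comp_div hc).const_mul _

lemma integral_univ_inv_sq_add_sq (hc : 0 < c) : ∫ ω : ℝ, (c ^ 2 + ω ^ 2)⁻¹ = Real.pi / c := by
  simp_rw [inv_sq_add_sq_eq hc.ne']
  rw [integral_const_mul, Measure.integral_comp_div (fun ω : ℝ => (1 + ω ^ 2)⁻¹),
    integral_univ_inv_one_add_sq, abs_of_pos hc, smul_eq_mul]
  field_simp

lemma integral_norm_sq_le_of_norm_le_div {G : ℂ → ℂ} {K s : ℝ} (hc : 0 < c) (hs : 0 < s)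
    (hG : ∀ z : ℂ, 0 < z.re → ‖G z‖ ≤ K / ‖z + c‖) :
    ∫ ω : ℝ, ‖G (s + Complex.I * ω)‖ ^ 2 ≤ K ^ 2 * (Real.pi / c) := by
  have hpt : ∀ ω : ℝ, ‖G (s + Complex.I * ω)‖ ^ 2 ≤ K ^ 2 * (c ^ 2 + ω ^ 2)⁻¹ := fun ω => by
    have hz : 0 < (s + Complex.I * ω).re := by simpa using hs
    have hnorm : ‖(s + Complex.I * ω) + c‖ ^ 2 = (s + c) ^ 2 + ω ^ 2 := by
      rw [Complex.sq_norm, Complex.normSq_apply]; simp; ring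
    calc ‖G (s + Complex.I * ω)‖ ^ 2 ≤ (K / ‖(s + Complex.I * ω) + c‖) ^ 2 :=
          pow_le_pow_left₀ (norm_nonneg _) (hG _ hz) 2
      _ = K ^ 2 * ((s + c) ^ 2 + ω ^ 2)⁻¹ := by rw [div_pow, hnorm, div_eq_mul_inv]
      _ ≤ K ^ 2 * (c ^ 2 + ω ^ 2)⁻¹ := by gcongr; nlinarith
  calc ∫ ω : ℝ, ‖G (s + Complex.I * ω)‖ ^ 2 ≤ ∫ ω : ℝ, K ^ 2 * (c ^ 2 + ω ^ 2)⁻¹ :=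
        integral_mono_of_nonneg (.of_forall fun _ => by positivity)
          ((integrable_inv_sq_add_sq hc.ne').const_mul _) (.of_forall hpt)
    _ = K ^ 2 * (Real.pi / c) := by rw [integral_const_mul, integral_univ_inv_sq_add_sq hc]

end SquareIntegral

theorem V_Hinfty_and_KV_Hinfty_H2_general (m : ℕ) (a : Fin m → ℝ)
    (r γ : ℝ) (hγ : 0 < γ) (d : Polynomial ℂ) (hd : d.degree < (m : WithBot ℕ)) :
    (DifferentiableOn ℂ (Vfun m a r γ) {z : ℂ | 0 < z.re} ∧
      ∃ M : ℝ, ∀ z : ℂ, 0 < z.re → ‖Vfun m a r γ z‖ ≤ M) ∧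
    ∃ G : ℂ → ℂ,
      DifferentiableOn ℂ G {z : ℂ | 0 < z.re} ∧
      (∀ z : ℂ, 0 < z.re → (∀ j, z ≠ (a j : ℂ)) →
        G z = (Polynomial.eval z d / ∏ j, (z - (a j : ℂ))) * Vfun m a r γ z) ∧
      (∃ M : ℝ, ∀ z : ℂ, 0 < z.re → ‖G z‖ ≤ M) ∧
      (∃ C : ℝ, ∀ s : ℝ, 0 < s → (∫ ω : ℝ, ‖G (s + Complex.I * ω)‖ ^ 2) ≤ C) := by
  have hc : 0 < γ ^ (-r) := Real.rpow_pos_of_pos hγ _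
  obtain ⟨K, hK, hG⟩ := exists_norm_kernelExt_le (γ := γ) (a := a) hc (by simpa using hd)
  refine ⟨⟨differentiableOn_Vfun hγ, _, fun z hz => norm_Vfun_le hγ hz.le⟩,
    kernelExt (γ ^ (-r)) γ a d, differentiableOn_kernelExt hc,
    fun z hz hza => kernelExt_eq hγ.ne' (add_ofReal_ne_zero hc hz.le) hza,
    ⟨K / γ ^ (-r), fun z hz => ?_⟩,
    ⟨_, fun s hs => integral_norm_sq_le_of_norm_le_div hc hs fun z hz => hG z hz.le⟩⟩
  exact (hG z hz.le).trans (div_le_div_of_nonneg_left hK hc (le_norm_add_ofReal hz.le))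

/-- Lemma 1(i): `V ∈ H^∞(ℂ⁺)` and `K̂ = K·V` extends to a function in `H^∞ ∩ H²` of the
half-plane `ℂ⁺` (the poles of `K` at the `a_j` being removable). -/
theorem V_Hinfty_and_KV_Hinfty_H2 (m : ℕ) (hm : 0 < m) (a : Fin m → ℝ) (ha : ∀ j, 0 < a j)
    (r γ : ℝ) (hr : 0 < r) (hγ : 0 < γ) (d : Polynomial ℂ) (hd : d.degree < (m : WithBot ℕ)) :
    (DifferentiableOn ℂ (Vfun m a r γ) {z : ℂ | 0 < z.re} ∧
      ∃ M : ℝ, ∀ z : ℂ, 0 < z.re → ‖Vfun m a r γ z‖ ≤ M) ∧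
    ∃ G : ℂ → ℂ,
      DifferentiableOn ℂ G {z : ℂ | 0 < z.re} ∧
      (∀ z : ℂ, 0 < z.re → (∀ j, z ≠ (a j : ℂ)) →
        G z = (Polynomial.eval z d / ∏ j, (z - (a j : ℂ))) * Vfun m a r γ z) ∧
      (∃ M : ℝ, ∀ z : ℂ, 0 < z.re → ‖G z‖ ≤ M) ∧
      (∃ C : ℝ, ∀ s : ℝ, 0 < s → (∫ ω : ℝ, ‖G (s + Complex.I * ω)‖ ^ 2) ≤ C) :=
  V_Hinfty_and_KV_Hinfty_H2_general m a r γ hγ d hd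
end
end
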